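/- Let 𝒯 be a tree-decomposition of length λ of a finite connected graph G, r : V → ℕ, φ a non-negative integer, and let T_φ be a minimum (r+φ)-covering subtree of 𝒯. If C is a connected vertex set of G that contains at least one vertex of each leaf bag of T_φ, then C is an (r + (φ+λ))-dominating set of G. -/

import Mathlib

open SimpleGraph

/-- A tree-decomposition of the graph `G`, with bags indexed by `ι`:
a tree on `ι` together with a bag `bag i ⊆ V` for each node such that every vertex
lies in some bag, every edge of `G` has both endpoints in a common bag, and for each
vertex the bags containing it induce a subtree. -/
structure TreeDecomp {V : Type} (G : SimpleGraph V) (ι : Type) where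
  tree : SimpleGraph ι
  isTree : tree.IsTree
  bag : ι → Set V
  covers_vertex : ∀ v : V, ∃ i : ι, v ∈ bag i
  covers_edge : ∀ ⦃u v : V⦄, G.Adj u v → ∃ i : ι, u ∈ bag i ∧ v ∈ bag i
  bags_connected : ∀ v : V, (tree.induce {i : ι | v ∈ bag i}).Connected

variable {V ι : Type}

/-- The tree-decomposition has breadth `ρ`: each bag is contained in the
`ρ`-neighbourhood of some vertex of `G`. -/
def TreeDecomp.HasBreadth {G : SimpleGraph V} (TD : TreeDecomp G ι) (ρ : ℕ) : Prop :=
  ∀ i : ι, ∃ c : V, ∀ u ∈ TD.bag i, G.dist u c ≤ ρ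

/-- The tree-decomposition has length `lam`: any two vertices of a common bag are at
distance at most `lam` in `G`. -/
def TreeDecomp.HasLength {G : SimpleGraph V} (TD : TreeDecomp G ι) (lam : ℕ) : Prop :=
  ∀ i : ι, ∀ u ∈ TD.bag i, ∀ v ∈ TD.bag i, G.dist u v ≤ lam

/-- `G` admits a (finite) tree-decomposition of length `lam`. -/
def HasTDOfLength (G : SimpleGraph V) (lam : ℕ) : Prop :=
  ∃ (ι : Type) (_ : Fintype ι) (TD : TreeDecomp G ι), TD.HasLength lam

/-- The tree-length of `G` equals `lam`: `lam` is the minimum length over all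
tree-decompositions of `G`. -/
def TreeLengthEq (G : SimpleGraph V) (lam : ℕ) : Prop :=
  HasTDOfLength G lam ∧ ∀ lam' : ℕ, HasTDOfLength G lam' → lam ≤ lam'

/-- `D` is an `(r+φ)`-dominating set of `G`: every vertex `v` is within distance
`r v + φ` of `D`. -/
def IsRPhiDomSet (G : SimpleGraph V) (r : V → ℕ) (φ : ℕ) (D : Set V) : Prop :=
  ∀ v : V, ∃ u ∈ D, G.dist v u ≤ r v + φ

/-- `S` induces a connected subgraph of `G`. -/
def IsConnSet (G : SimpleGraph V) (S : Set V) : Prop := (G.induce S).Connected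

/-- `T'` is an `(r+φ)`-covering subtree of the tree-decomposition `TD`: a connected
set of bags such that every vertex `v` of `G` is within distance `r v + φ` of some
bag of `T'`. -/
def IsCovSubtree {G : SimpleGraph V} (TD : TreeDecomp G ι) (r : V → ℕ) (φ : ℕ)
    (T' : Set ι) : Prop :=
  (TD.tree.induce T').Connected ∧
    ∀ v : V, ∃ i ∈ T', ∃ u ∈ TD.bag i, G.dist v u ≤ r v + φ

/-- The degree of the bag `i` inside the subtree `T'` of the decomposition tree. -/
noncomputable def bagDegree {G : SimpleGraph V} (TD : TreeDecomp G ι)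
    (T' : Set ι) (i : ι) : ℕ :=
  {j : ι | j ∈ T' ∧ TD.tree.Adj i j}.ncard

/-!
The bags meeting the connected set `C` form a subtree of the decomposition tree, since the bags
containing a single vertex do and every edge of `C` lies in some bag. A subtree containing every
leaf of the finite subtree `T_φ` contains all of `T_φ`: each node of `T_φ` lies on a path of
`T_φ` between two of its leaves, and in a tree this is the only path between them. Hence every
bag of `T_φ` meets `C`, and a vertex `v` within `r v + φ` of a bag is within `r v + φ + λ` of `C`.
-/

namespace SimpleGraph

variable {V : Type*} {G : SimpleGraph V}

theorem IsAcyclic.exists_isPath_mem_support_between_leaves [Finite V] (hG : G.IsAcyclic)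
    (x : V) : ∃ (u v : V) (p : G.Walk u v), p.IsPath ∧ x ∈ p.support ∧
      (G.neighborSet u).Subsingleton ∧ (G.neighborSet v).Subsingleton := by
  have := Fintype.ofFinite V
  let s := {n | ∃ (u v : V) (p : G.Walk u v), p.IsPath ∧ x ∈ p.support ∧ p.length = n}
  have hs : s.Finite := (Set.finite_lt_nat (Fintype.card V)).subset
    fun n ⟨_, _, _, hp, _, hn⟩ ↦ hn ▸ hp.length_lt
  obtain ⟨_, ⟨u, v, p, hp, hx, rfl⟩, hmax⟩ :=
    hs.exists_maximal ⟨0, x, x, .nil, .nil, by simp, rfl⟩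
  -- A neighbour of an end of the longest path lies on it, otherwise the path would extend;
  -- by acyclicity it is then the vertex next to that end.
  refine ⟨u, v, p, hp, hx, ?_, ?_⟩
  · refine Set.subsingleton_of_forall_eq p.snd fun w (hw : G.Adj u w) ↦
      hG.eq_snd_of_adj_start hp hw ?_
    by_contra hw'
    have := hmax ⟨_, _, p.cons hw.symm, hp.cons hw', by simp [hx], rfl⟩
    simp at this
  · refine Set.subsingleton_of_forall_eq p.penultimate fun w (hw : G.Adj v w) ↦
      hG.eq_penultimate_of_adj_end hp hw ?_
    by_contra hw'
    have := hmax ⟨_, _, p.concat hw, hp.concat hw' hw, by simp [Walk.support_concat, hx], rfl⟩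
    simp at this

theorem IsAcyclic.subset_of_preconnected_of_leaves_subset [Finite V] (hG : G.IsAcyclic)
    {S A : Set V} (hA : (G.induce A).Preconnected)
    (hleaves : ∀ i ∈ S, {j | j ∈ S ∧ G.Adj i j}.ncard ≤ 1 → i ∈ A) : S ⊆ A := by
  intro i hi
  have mem_A_of_leaf : ∀ l : S, ((G.induce S).neighborSet l).Subsingleton → l.1 ∈ A := by
    intro l hl
    refine hleaves l l.2 (Set.ncard_le_one_iff_subsingleton.mpr ?_)
    exact (hl.image Subtype.val).anti fun j ⟨hjS, hj⟩ ↦ ⟨⟨j, hjS⟩, hj, rfl⟩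
  obtain ⟨u, v, p, hp, hip, hu, hv⟩ :=
    (hG.induce S).exists_isPath_mem_support_between_leaves ⟨i, hi⟩
  obtain ⟨q, hq⟩ := (hA ⟨u, mem_A_of_leaf u hu⟩ ⟨v, mem_A_of_leaf v hv⟩).exists_isPath
  have hpq : p.map (Embedding.induce S).toHom = q.map (Embedding.induce A).toHom :=
    congrArg Subtype.val <| (hG.subsingleton_path u v).elim
      ⟨_, hp.map (f := (Embedding.induce S).toHom) Subtype.val_injective⟩
      ⟨_, hq.map (f := (Embedding.induce A).toHom) Subtype.val_injective⟩
  have hiq : i ∈ (p.map (Embedding.induce S).toHom).support := by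
    rw [Walk.support_map]
    exact List.mem_map_of_mem hip
  have hqA : ∀ x ∈ (q.map (Embedding.induce A).toHom).support, x ∈ A := by
    intro x hx
    rw [Walk.support_map] at hx
    obtain ⟨y, -, rfl⟩ := List.mem_map.mp hx
    exact y.2
  exact hqA i (hpq ▸ hiq)

end SimpleGraph

namespace TreeDecomp

variable {G : SimpleGraph V} (TD : TreeDecomp G ι)

def bagsMeeting (C : Set V) : Set ι := {i | (C ∩ TD.bag i).Nonempty}

theorem preconnected_induce_bagsMeeting {C : Set V} (hC : (G.induce C).Preconnected) :
    (TD.tree.induce (TD.bagsMeeting C)).Preconnected := by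
  have bags_of_vertex : ∀ (x : C) {i j : ι} (hi : x.1 ∈ TD.bag i) (hj : x.1 ∈ TD.bag j),
      (TD.tree.induce (TD.bagsMeeting C)).Reachable ⟨i, x, x.2, hi⟩ ⟨j, x, x.2, hj⟩ := by
    intro x i j hi hj
    have hsub : {k | x.1 ∈ TD.bag k} ⊆ TD.bagsMeeting C := fun k hk ↦ ⟨x, x.2, hk⟩
    exact ((TD.bags_connected x).preconnected ⟨i, hi⟩ ⟨j, hj⟩).map (induceHomOfLE _ hsub).toHom
  have bags_of_walk : ∀ {x y : C} (w : (G.induce C).Walk x y) {i j : ι}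
      (hi : x.1 ∈ TD.bag i) (hj : y.1 ∈ TD.bag j),
      (TD.tree.induce (TD.bagsMeeting C)).Reachable ⟨i, x, x.2, hi⟩ ⟨j, y, y.2, hj⟩ := by
    intro x y w
    induction w with
    | nil => exact bags_of_vertex _
    | @cons x y z hxy _ ih =>
      intro i j hi hj
      obtain ⟨k, hxk, hyk⟩ := TD.covers_edge hxy
      exact (bags_of_vertex x hi hxk).trans (ih hyk hj)
  rintro ⟨i, x, hxC, hxi⟩ ⟨j, y, hyC, hyj⟩
  obtain ⟨w⟩ := hC ⟨x, hxC⟩ ⟨y, hyC⟩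
  exact bags_of_walk w hxi hyj

end TreeDecomp

theorem connected_leaf_transversal_dominates_general
    {V ι : Type} [Fintype ι]
    (G : SimpleGraph V) (hconn : G.Connected) (TD : TreeDecomp G ι)
    (lam : ℕ) (hlam : TD.HasLength lam) (r : V → ℕ) (φ : ℕ)
    (Tφ : Set ι) (hTφ : IsCovSubtree TD r φ Tφ)
    (C : Set V) (hC : IsConnSet G C)
    (hleaf : ∀ i ∈ Tφ, bagDegree TD Tφ i ≤ 1 → (C ∩ TD.bag i).Nonempty) :
    IsRPhiDomSet G r (φ + lam) C := by
  intro v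
  obtain ⟨i, hiT, u, hu, hvu⟩ := hTφ.2 v
  have hTφC : Tφ ⊆ TD.bagsMeeting C :=
    TD.isTree.isAcyclic.subset_of_preconnected_of_leaves_subset
      (TD.preconnected_induce_bagsMeeting hC.preconnected) hleaf
  obtain ⟨c, hcC, hci⟩ := hTφC hiT
  refine ⟨c, hcC, ?_⟩
  calc G.dist v c ≤ G.dist v u + G.dist u c := hconn.dist_triangle
    _ ≤ r v + φ + lam := add_le_add hvu (hlam i u hu c hci)
    _ = r v + (φ + lam) := add_assoc ..

/-- Let `T_φ` be a minimum `(r+φ)`-covering subtree of a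
tree-decomposition of length `lam` of `G`.  If `C` is a connected vertex set
containing at least one vertex of each leaf bag of `T_φ`, then `C` is an
`(r + (φ+lam))`-dominating set of `G`. -/
theorem connected_leaf_transversal_dominates
    {V ι : Type} [Fintype V] [Fintype ι]
    (G : SimpleGraph V) (hconn : G.Connected) (TD : TreeDecomp G ι)
    (lam : ℕ) (hlam : TD.HasLength lam) (r : V → ℕ) (φ : ℕ)
    (Tφ : Set ι) (hTφ : IsCovSubtree TD r φ Tφ)
    (hmin : ∀ T'' : Set ι, IsCovSubtree TD r φ T'' → Tφ.ncard ≤ T''.ncard)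
    (C : Set V) (hC : IsConnSet G C)
    (hleaf : ∀ i ∈ Tφ, bagDegree TD Tφ i ≤ 1 → (C ∩ TD.bag i).Nonempty) :
    IsRPhiDomSet G r (φ + lam) C :=
  connected_leaf_transversal_dominates_general G hconn TD lam hlam r φ Tφ hTφ C hC hleaf
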